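/- arXiv:2603.22638 — 6 statements merged into one kernel-verified Lean document; each statement's English description precedes it below -/
import Mathlib

section
/- Let n ≥ 1 and let g, h ∈ A_n be a p-cycle and an r-cycle with supports Δ and Δ' respectively, where p ≤ r are primes with p + r < n and Δ ∩ Δ' = ∅. Then the proportion |{x ∈ A_n : |Δ^x ∩ Δ'| = 1}| / |A_n| is strictly greater than r·p·(n − r·p)/(n − p + 2)², where Δ^x denotes the image of the set Δ under the permutation x. -/
/-!
The alternating group `A_n` (`n ≥ 3`) acts transitively on the `p`-subsets of `{1, …, n}`, so
`x ↦ Δ^x` is equidistributed over them and the proportion equals `r·C(n-r, p-1) / C(n, p)`, the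
chance that a random `p`-subset meets `Δ'` in exactly one point. Iterating Pascal's rule gives
`C(n-1, p-1) ≤ C(n-r, p-1) + (r-1)·C(n-1, p-2)`, so the proportion is at least
`rp(n-rp+r) / (n(n-p+1))`, and this exceeds `rp(n-rp)/(n-p+2)²` by a polynomial inequality
(the bound is `≤ 0` anyway when `n ≤ rp`).
-/

open Finset

theorem MulAction.card_smul_mem_mul_card {G X : Type*} [Group G] [Finite G] [MulAction G X]
    [Finite X] [IsPretransitive G X] (P : X → Prop) (x₀ : X) :
    Nat.card {g : G // P (g • x₀)} * Nat.card X = Nat.card {x : X // P x} * Nat.card G := by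
  classical
  have := Fintype.ofFinite G
  have := Fintype.ofFinite X
  have fiber (x : X) : Nat.card {g : G // P (g • x)} = Nat.card {g : G // P (g • x₀)} := by
    obtain ⟨h, rfl⟩ := exists_smul_eq G x₀ x
    exact Nat.card_congr ((Equiv.mulRight h).subtypeEquiv fun g => by simp [mul_smul])
  have translate (g : G) : Nat.card {x : X // P (g • x)} = Nat.card {x : X // P x} :=
    Nat.card_congr ((MulAction.toPerm g).subtypeEquiv fun x => Iff.rfl)
  calc _ = ∑ x : X, Nat.card {g : G // P (g • x)} := by
        rw [sum_congr rfl fun x _ => fiber x, sum_const, smul_eq_mul, card_univ,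
          ← Nat.card_eq_fintype_card, mul_comm]
    _ = ∑ g : G, Nat.card {x : X // P (g • x)} := by
      simp only [Nat.card_eq_fintype_card, Fintype.card_subtype, card_filter]
      exact sum_comm
    _ = _ := by
      rw [sum_congr rfl fun g _ => translate g, sum_const, smul_eq_mul, card_univ,
        ← Nat.card_eq_fintype_card, mul_comm]

theorem Finset.card_powersetCard_filter_card_inter_eq_one {α : Type*} [Fintype α]
    [DecidableEq α] (D : Finset α) (k : ℕ) :
    #{S ∈ powersetCard (k + 1) (univ : Finset α) | #(S ∩ D) = 1} =
      #D * (Fintype.card α - #D).choose k := by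
  have hsplit : {S ∈ powersetCard (k + 1) (univ : Finset α) | #(S ∩ D) = 1} =
      D.biUnion fun a => {S ∈ powersetCard (k + 1) (insert a Dᶜ) | {a} ⊆ S} := by
    ext S
    simp only [mem_filter, mem_powersetCard, mem_biUnion, card_eq_one,
      eq_singleton_iff_unique_mem, mem_inter, subset_iff, mem_insert, mem_compl]
    grind
  have hfiber (a : α) (ha : a ∈ D) :
      #{S ∈ powersetCard (k + 1) (insert a Dᶜ) | {a} ⊆ S} = (Fintype.card α - #D).choose k := by
    rw [card_filter_powersetCard_subset _ _ _ (by simp) (by simp),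
      card_insert_of_notMem (by simpa), card_compl, card_singleton]
    simp
  rw [hsplit, card_biUnion, sum_congr rfl hfiber, sum_const, smul_eq_mul]
  intro a _ b hb hab
  simp only [Function.onFun, disjoint_left, mem_filter, mem_powersetCard, subset_iff, mem_insert,
    mem_compl, mem_singleton]
  grind

theorem alternatingGroup.card_image_inter_eq_one_mul_choose {α : Type*} [Fintype α]
    [DecidableEq α] (hα : 3 ≤ Fintype.card α) {k : ℕ} (Δ D : Finset α) (hΔ : #Δ = k + 1) :
    Nat.card {x : Equiv.Perm α // x ∈ alternatingGroup α ∧ #(Δ.image x ∩ D) = 1} *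
        (Fintype.card α).choose (k + 1) =
      #D * (Fintype.card α - #D).choose k * Nat.card (alternatingGroup α) := by
  have := Set.powersetCard.isPretransitive_alternatingGroup (α := α) (n := k + 1)
    (by rwa [Nat.card_eq_fintype_card])
  have h := MulAction.card_smul_mem_mul_card (G := alternatingGroup α)
    (fun S : Set.powersetCard α (k + 1) => #((S : Finset α) ∩ D) = 1)
    ⟨Δ, Set.powersetCard.mem_iff.2 hΔ⟩
  rw [Set.powersetCard.card, Nat.card_eq_fintype_card (α := α)] at h
  convert h using 2
  · exact Nat.card_congr ((Equiv.subtypeSubtypeEquivSubtypeInter _ _).symm.trans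
      (Equiv.subtypeEquivRight fun x => Iff.rfl))
  · rw [← card_powersetCard_filter_card_inter_eq_one, powersetCard_eq_filter, powerset_univ,
      filter_filter, ← Fintype.card_subtype, ← Nat.card_eq_fintype_card]
    exact Nat.card_congr (Equiv.subtypeSubtypeEquivSubtypeInter _ _).symm

theorem Nat.choose_add_le_choose_add_mul_choose (N j k : ℕ) :
    (N + j).choose (k + 1) ≤ N.choose (k + 1) + j * (N + j).choose k := by
  induction j with
  | zero => simp
  | succ j ih =>
    have hmono : (N + j).choose k ≤ (N + j + 1).choose k := Nat.choose_le_choose k (by omega)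
    rw [← Nat.add_assoc, Nat.choose_succ_succ', Nat.succ_mul]
    nlinarith [Nat.mul_le_mul_left j hmono]

theorem choose_pred_mul_le_choose_sub_mul {n r k : ℕ} (hr : 1 ≤ r) (hrn : r ≤ n) (hkn : k < n) :
    ((n - 1).choose (k + 1) : ℝ) * (n - r * (k + 1)) ≤ (n - r).choose (k + 1) * (n - k - 1) := by
  have hpascal := Nat.choose_add_le_choose_add_mul_choose (n - r) (r - 1) k
  rw [show n - r + (r - 1) = n - 1 by omega] at hpascal
  have habsorb := Nat.choose_succ_right_eq (n - 1) k
  rw [Nat.sub_sub] at habsorb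
  have hpascal' : ((n - 1).choose (k + 1) : ℝ) ≤
      (n - r).choose (k + 1) + (r - 1 : ℕ) * (n - 1).choose k := by exact_mod_cast hpascal
  have habsorb' :
      ((n - 1).choose (k + 1) : ℝ) * (k + 1) = (n - 1).choose k * (n - (1 + k) : ℕ) := by
    exact_mod_cast habsorb
  push_cast [Nat.cast_sub hr, Nat.cast_sub (show 1 + k ≤ n by omega)] at hpascal' habsorb'
  have hk : (k : ℝ) + 1 ≤ n := by exact_mod_cast hkn
  nlinarith [mul_le_mul_of_nonneg_right hpascal' (by linarith : (0 : ℝ) ≤ n - k - 1)]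

theorem sub_mul_mul_lt_sub_mul_sq {N P R : ℝ} (hP : 2 ≤ P) (hPR : P ≤ R) (hN : R * P < N) :
    (N - R * P) * N * (N - P + 1) < (N - R * (P - 1)) * (N - P + 2) ^ 2 := by
  have hm : 0 < N - P + 2 := by nlinarith
  -- With `m = N - P + 2` and `A = N - R * P`, the difference of the two sides is
  -- `m * (R * m - (P - 2) * (m - 1)) + (m - A) * (P - 2) * (m - 1) + A * m`.
  nlinarith [mul_nonneg (by nlinarith : (0 : ℝ) ≤ R * P - P + 2)
      (mul_nonneg (sub_nonneg.2 hP) (by nlinarith : (0 : ℝ) ≤ N - P + 1)),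
    mul_pos (sub_pos.2 hN) hm,
    mul_nonneg hm.le (by nlinarith : (0 : ℝ) ≤ (R - P + 2) * (N - P + 2) + P - 2)]

theorem lt_mul_choose_sub_div_choose {n p r : ℕ} (hp : 2 ≤ p) (hpr : p ≤ r) (hprn : p + r < n) :
    (r : ℝ) * p * (n - r * p) / (n - p + 2) ^ 2 < r * (n - r).choose (p - 1) / n.choose p := by
  have hr : (0 : ℝ) < r := by exact_mod_cast (show 0 < r by omega)
  have hK : (0 : ℝ) < (n - r).choose (p - 1) := by exact_mod_cast Nat.choose_pos (by omega)
  have hC : (0 : ℝ) < n.choose p := by exact_mod_cast Nat.choose_pos (by omega)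
  rcases le_or_gt (n : ℝ) (r * p) with hA | hA
  · calc _ ≤ (0 : ℝ) := div_nonpos_of_nonpos_of_nonneg
          (mul_nonpos_of_nonneg_of_nonpos (by positivity) (by linarith)) (sq_nonneg _)
      _ < _ := by positivity
  obtain ⟨k, rfl⟩ : ∃ k, p = k + 2 := ⟨p - 2, by omega⟩
  rw [Nat.add_succ_sub_one]
  push_cast at hA ⊢
  have hB : (0 : ℝ) < (n - 1).choose (k + 1) := by exact_mod_cast Nat.choose_pos (by omega)
  have hk : (k : ℝ) + 2 + r < n := by exact_mod_cast hprn
  have habsorb : (n.choose (k + 2) : ℝ) * (k + 2) = n * (n - 1).choose (k + 1) := by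
    have := Nat.add_one_mul_choose_eq (n - 1) (k + 1)
    rw [Nat.sub_add_cancel (by omega)] at this
    exact_mod_cast this.symm
  have hlower := choose_pred_mul_le_choose_sub_mul (n := n) (r := r) (k := k)
    (by omega) (by omega) (by omega)
  have hpoly := sub_mul_mul_lt_sub_mul_sq (N := n) (P := k + 2) (R := r) (by linarith)
    (by exact_mod_cast hpr) hA
  have key : ((n : ℝ) - r * (k + 2)) * n * (n - 1).choose (k + 1) <
      (n - r).choose (k + 1) * (n - (k + 2) + 2) ^ 2 := by
    refine lt_of_mul_lt_mul_right ?_ (by linarith : (0 : ℝ) ≤ n - k - 1)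
    calc ((n : ℝ) - r * (k + 2)) * n * (n - 1).choose (k + 1) * (n - k - 1)
        = (n - 1).choose (k + 1) * ((n - r * (k + 2)) * n * (n - (k + 2) + 1)) := by ring
      _ < (n - 1).choose (k + 1) * ((n - r * (k + 2 - 1)) * (n - (k + 2) + 2) ^ 2) := by gcongr
      _ = (n - 1).choose (k + 1) * (n - r * (k + 1)) * (n - (k + 2) + 2) ^ 2 := by ring
      _ ≤ (n - r).choose (k + 1) * (n - k - 1) * (n - (k + 2) + 2) ^ 2 := by gcongr
      _ = _ := by ring
  rw [div_lt_div_iff₀ (pow_pos (by linarith) 2) hC]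
  calc (r : ℝ) * (k + 2) * (n - r * (k + 2)) * n.choose (k + 2)
      = r * ((n - r * (k + 2)) * (n.choose (k + 2) * (k + 2))) := by ring
    _ = r * ((n - r * (k + 2)) * n * (n - 1).choose (k + 1)) := by rw [habsorb]; ring
    _ < r * ((n - r).choose (k + 1) * (n - (k + 2) + 2) ^ 2) := by gcongr
    _ = _ := by ring

theorem proportion_conjugates_meeting_support_in_one_point_general
    (n p r : ℕ) (hp : p.Prime) (hpr : p ≤ r) (hprn : p + r < n)
    (g h : Equiv.Perm (Fin n))
    (hgp : g.support.card = p)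
    (hhr : h.support.card = r) :
    (Nat.card {x : Equiv.Perm (Fin n) // x ∈ alternatingGroup (Fin n) ∧
        (g.support.image x ∩ h.support).card = 1} : ℝ) /
      (Nat.card (alternatingGroup (Fin n)) : ℝ) >
      (r : ℝ) * (p : ℝ) * ((n : ℝ) - (r : ℝ) * (p : ℝ)) / ((n : ℝ) - (p : ℝ) + 2) ^ 2 := by
  have hp2 := hp.two_le
  obtain ⟨k, rfl⟩ : ∃ k, p = k + 1 := ⟨p - 1, by omega⟩
  have hcount := alternatingGroup.card_image_inter_eq_one_mul_choose (α := Fin n)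
    (by rw [Fintype.card_fin]; omega) g.support h.support hgp
  rw [Fintype.card_fin, hhr] at hcount
  have hproportion : (Nat.card {x : Equiv.Perm (Fin n) // x ∈ alternatingGroup (Fin n) ∧
      #(g.support.image x ∩ h.support) = 1} : ℝ) / Nat.card (alternatingGroup (Fin n)) =
      r * (n - r).choose k / n.choose (k + 1) := by
    rw [div_eq_div_iff (by exact_mod_cast Nat.card_pos.ne')
      (by exact_mod_cast (Nat.choose_pos (by omega)).ne')]
    exact_mod_cast hcount
  rw [hproportion]
  simpa using lt_mul_choose_sub_div_choose hp2 hpr hprn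

/-- Lemma: for disjoint `p`- and `r`-cycles `g, h ∈ A_n` with `p + r < n`, the proportion of
`x ∈ A_n` for which `|Δ^x ∩ Δ'| = 1` is greater than `rp(n - rp)/(n - p + 2)²`. -/
theorem proportion_conjugates_meeting_support_in_one_point
    (n p r : ℕ) (hp : p.Prime) (hr : r.Prime) (hpr : p ≤ r) (hprn : p + r < n)
    (g h : Equiv.Perm (Fin n))
    (hg : g ∈ alternatingGroup (Fin n)) (hh : h ∈ alternatingGroup (Fin n))
    (hgc : g.IsCycle) (hgp : g.support.card = p)
    (hhc : h.IsCycle) (hhr : h.support.card = r)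
    (hdisj : g.support ∩ h.support = ∅) :
    (Nat.card {x : Equiv.Perm (Fin n) // x ∈ alternatingGroup (Fin n) ∧
        (g.support.image x ∩ h.support).card = 1} : ℝ) /
      (Nat.card (alternatingGroup (Fin n)) : ℝ) >
      (r : ℝ) * (p : ℝ) * ((n : ℝ) - (r : ℝ) * (p : ℝ)) / ((n : ℝ) - (p : ℝ) + 2) ^ 2 :=
  proportion_conjugates_meeting_support_in_one_point_general n p r hp hpr hprn g h hgp hhr
end

section
/- Let G be a finite group and let M be a proper subgroup of G with N_G(M) = M. Let g ∈ M and suppose that g^G ∩ M = g^M, i.e. the G-conjugates of g lying in M form a single M-conjugacy class. Then the number of G-conjugates L of M with g ∈ L equals |C_G(g)| / |C_M(g)|. -/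
/-!
The centralizer `C = C_G(g)` maps onto the conjugates of `M` containing `g` by `c ↦ cMc⁻¹`:
if `g ∈ xMx⁻¹` then `x⁻¹gx ∈ g^G ∩ M = g^M`, say `x⁻¹gx = mgm⁻¹`, and then `xm ∈ C` with
`(xm)M(xm)⁻¹ = xMx⁻¹`. Since `M` is self-normalizing, `aMa⁻¹ = bMb⁻¹` iff `a⁻¹b ∈ M`, so the
fibres of this map are the cosets of `C ∩ M` in `C`, and the count is `|C : C ∩ M|`.
-/

open Pointwise

namespace Subgroup

variable {G : Type*} [Group G]

theorem mem_conj_smul_iff {H : Subgroup G} {x y : G} :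
    y ∈ MulAut.conj x • H ↔ x⁻¹ * y * x ∈ H := by
  simp [mem_pointwise_smul_iff_inv_smul_mem, MulAut.smul_def]

theorem eq_conj_smul_iff {H L : Subgroup G} {x : G} :
    L = MulAut.conj x • H ↔ ∀ y, y ∈ L ↔ ∃ h ∈ H, y = x * h * x⁻¹ := by
  simp [SetLike.ext_iff, mem_smul_pointwise_iff_exists, eq_comm]

theorem conj_smul_eq_self_iff {H : Subgroup G} {x : G} :
    MulAut.conj x • H = H ↔ x ∈ normalizer (H : Set G) := by
  rw [mem_normalizer_iff_map_conj_eq]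
  rfl

theorem conj_smul_eq_conj_smul_iff {H : Subgroup G} (hH : normalizer (H : Set G) = H) {a b : G} :
    MulAut.conj a • H = MulAut.conj b • H ↔ a⁻¹ * b ∈ H := by
  rw [← SetLike.ext_iff.mp hH, ← conj_smul_eq_self_iff, map_mul, map_inv, mul_smul,
    inv_smul_eq_iff, eq_comm]

theorem natCard_range_conj_smul {H : Subgroup G} (hH : normalizer (H : Set G) = H)
    (K : Subgroup G) :
    Nat.card (Set.range fun k : K ↦ MulAut.conj (k : G) • H) = H.relIndex K := by
  have hker : Setoid.ker (fun k : K ↦ MulAut.conj (k : G) • H) =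
      QuotientGroup.leftRel (H.subgroupOf K) := by
    ext a b
    rw [Setoid.ker_def, QuotientGroup.leftRel_apply, mem_subgroupOf,
      conj_smul_eq_conj_smul_iff hH]
    simp
  rw [relIndex, index, ← Nat.card_congr (Setoid.quotientKerEquivRange _), hker]
  rfl

theorem card_inf_mul_relIndex (H K : Subgroup G) :
    Nat.card ↥(H ⊓ K) * H.relIndex K = Nat.card K := by
  rw [relIndex, ← card_mul_index (H.subgroupOf K), ← inf_subgroupOf_right,
    Nat.card_congr (subgroupOfEquivOfLe inf_le_right).toEquiv]

theorem setOf_conj_smul_mem_eq_range_centralizer {H : Subgroup G} {g : G} (hg : g ∈ H)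
    (hclass : ∀ x : G, x * g * x⁻¹ ∈ H → ∃ h ∈ H, x * g * x⁻¹ = h * g * h⁻¹) :
    {L : Subgroup G | (∃ x : G, L = MulAut.conj x • H) ∧ g ∈ L} =
      Set.range fun c : centralizer {g} ↦ MulAut.conj (c : G) • H := by
  ext L
  constructor
  · rintro ⟨⟨x, rfl⟩, hgL⟩
    obtain ⟨h, hh, hconj⟩ := hclass x⁻¹ (by simpa [mem_conj_smul_iff] using hgL)
    refine ⟨⟨x * h, mem_centralizer_singleton_iff.mpr ?_⟩, ?_⟩
    · rw [inv_inv] at hconj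
      calc x * h * g = x * (h * g * h⁻¹) * x⁻¹ * (x * h) := by group
        _ = g * (x * h) := by rw [← hconj]; group
    · simp only [map_mul, mul_smul, conj_smul_eq_self_of_mem hh]
  · rintro ⟨⟨c, hc⟩, rfl⟩
    refine ⟨⟨c, rfl⟩, mem_conj_smul_iff.mpr ?_⟩
    rwa [mul_assoc, ← mem_centralizer_singleton_iff.mp hc, inv_mul_cancel_left]

end Subgroup

open Subgroup

theorem count_conjugate_subgroups_containing_element_general
    {G : Type*} [Group G] [Finite G]
    (M : Subgroup G) (hNorm : Subgroup.normalizer (M : Set G) = M)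
    (g : G) (hg : g ∈ M)
    (hclass : ∀ x : G, x * g * x⁻¹ ∈ M → ∃ m ∈ M, x * g * x⁻¹ = m * g * m⁻¹) :
    (Nat.card ↥{L : Subgroup G |
        (∃ x : G, ∀ y : G, y ∈ L ↔ ∃ m ∈ M, y = x * m * x⁻¹) ∧ g ∈ L} : ℝ) =
      (Nat.card ↥{x : G | x * g = g * x} : ℝ) /
        (Nat.card ↥{x : G | x ∈ M ∧ x * g = g * x} : ℝ) := by
  have hconjugates :
      {L : Subgroup G | (∃ x : G, ∀ y : G, y ∈ L ↔ ∃ m ∈ M, y = x * m * x⁻¹) ∧ g ∈ L} =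
        Set.range fun c : centralizer {g} ↦ MulAut.conj (c : G) • M := by
    simp_rw [← eq_conj_smul_iff]
    exact setOf_conj_smul_mem_eq_range_centralizer hg hclass
  have hcentralizer : Nat.card ↥{x : G | x * g = g * x} = Nat.card (centralizer {g}) :=
    Nat.card_congr <| Equiv.subtypeEquivRight fun _ ↦ mem_centralizer_singleton_iff.symm
  have hcentralizer_inf :
      Nat.card ↥{x : G | x ∈ M ∧ x * g = g * x} = Nat.card ↥(M ⊓ centralizer {g}) :=
    Nat.card_congr <| Equiv.subtypeEquivRight fun _ ↦ by
      simp only [Set.mem_ofPred_eq, mem_inf, mem_centralizer_singleton_iff]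
  have hpos : (Nat.card ↥(M ⊓ centralizer {g}) : ℝ) ≠ 0 := by
    exact_mod_cast Nat.card_pos.ne'
  rw [hconjugates, hcentralizer, hcentralizer_inf, natCard_range_conj_smul hNorm,
    ← card_inf_mul_relIndex M (centralizer {g}), Nat.cast_mul, eq_div_iff hpos]
  exact mul_comm _ _

/-- Lemma: if `M` is a proper self-normalizing subgroup of a finite group `G`, `g ∈ M`, and
the `G`-conjugates of `g` lying in `M` form a single `M`-conjugacy class, then the number of
`G`-conjugates of `M` containing `g` equals `|C_G(g)| / |C_M(g)|`. -/
theorem count_conjugate_subgroups_containing_element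
    {G : Type*} [Group G] [Finite G]
    (M : Subgroup G) (hM : M ≠ ⊤) (hNorm : Subgroup.normalizer (M : Set G) = M)
    (g : G) (hg : g ∈ M)
    (hclass : ∀ x : G, x * g * x⁻¹ ∈ M → ∃ m ∈ M, x * g * x⁻¹ = m * g * m⁻¹) :
    (Nat.card ↥{L : Subgroup G |
        (∃ x : G, ∀ y : G, y ∈ L ↔ ∃ m ∈ M, y = x * m * x⁻¹) ∧ g ∈ L} : ℝ) =
      (Nat.card ↥{x : G | x * g = g * x} : ℝ) /
        (Nat.card ↥{x : G | x ∈ M ∧ x * g = g * x} : ℝ) :=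
  count_conjugate_subgroups_containing_element_general M hNorm g hg hclass
end

section
/- Let d ≥ 2 and q ≥ 2 be integers and let k satisfy 1 ≤ k ≤ d − 1. Then 1 < Δ(k, d; q) < (1 − q^{-1} − q^{-2})^{-1}. Moreover Δ(k, d; 2) < 4, Δ(k, d; 3) < 9/5, Δ(k, d; q) < 16/11 for q ≥ 4, and Δ(k, d; q) < 8/7 for q ≥ 9. -/
/-- `ω(k, d; t) = ∏_{i=k}^{d} (1 - t^{-i})`. -/
noncomputable def omegaProd (k d : ℕ) (t : ℝ) : ℝ :=
  ∏ i ∈ Finset.Icc k d, (1 - (t ^ i)⁻¹)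

/-- `Δ(k, d; t) = ω(k+1, d; t) / ω(1, d-k; t)`. -/
noncomputable def Delta (k d : ℕ) (t : ℝ) : ℝ :=
  omegaProd (k + 1) d t / omegaProd 1 (d - k) t

/-!
Write `x = t⁻¹`, so that `Δ(k, k + m; t) = ∏_{i=1}^m (1 - x^{k+i}) / ∏_{i=1}^m (1 - x^i)`.
Factor by factor the numerator beats the denominator, whence `Δ > 1`. The numerator is at most
`1`, and the denominator exceeds `1 - x - x²` by an Euler-type estimate, whence
`Δ < (1 - x - x²)⁻¹`; the numerical bounds follow since this is decreasing in `t ≥ 2`.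
-/

open Finset

theorem one_sub_sub_sq_add_pow_le_prod_one_sub_pow {x : ℝ} (hx0 : 0 ≤ x) (hx1 : x ≤ 1)
    {m : ℕ} (hm : 1 ≤ m) :
    1 - x - x ^ 2 + x ^ (m + 1) ≤ ∏ i ∈ Icc 1 m, (1 - x ^ i) := by
  induction m, hm using Nat.le_induction with
  | base => simp only [Icc_self, prod_singleton]; ring_nf; exact le_rfl
  | succ m hm ih =>
    rw [prod_Icc_succ_top (by omega)]
    have hxm : x ^ m ≤ x := pow_le_of_le_one hx0 hx1 (by omega)
    have hfac : 0 ≤ 1 - x ^ (m + 1) := sub_nonneg.2 (pow_le_one₀ hx0 hx1)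
    -- the two sides differ by `x^{m+3} - x^{2m+2} ≥ 0`
    calc 1 - x - x ^ 2 + x ^ (m + 1 + 1)
        ≤ (1 - x - x ^ 2 + x ^ (m + 1)) * (1 - x ^ (m + 1)) := by
          rw [pow_succ, pow_succ]
          linear_combination
            mul_nonneg (mul_nonneg (pow_nonneg hx0 m) (sq_nonneg x)) (sub_nonneg.2 hxm)
      _ ≤ _ := mul_le_mul_of_nonneg_right ih hfac

theorem omegaProd_eq_prod_inv_pow (k d : ℕ) (t : ℝ) :
    omegaProd k d t = ∏ i ∈ Icc k d, (1 - t⁻¹ ^ i) := by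
  simp only [omegaProd, inv_pow]

theorem omegaProd_add_eq_prod (k m : ℕ) (t : ℝ) :
    omegaProd (k + 1) (k + m) t = ∏ i ∈ Icc 1 m, (1 - t⁻¹ ^ (k + i)) := by
  rw [omegaProd_eq_prod_inv_pow, ← image_add_left_Icc, prod_image (by simp)]

section omegaProd

variable {t : ℝ}

theorem one_sub_inv_pow_pos (ht : 1 < t) {i : ℕ} (hi : 1 ≤ i) : 0 < 1 - t⁻¹ ^ i :=
  sub_pos.2 (pow_lt_one₀ (by positivity) (inv_lt_one_of_one_lt₀ ht) (by omega))

theorem omegaProd_pos (ht : 1 < t) {k : ℕ} (hk : 1 ≤ k) (d : ℕ) : 0 < omegaProd k d t := by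
  rw [omegaProd_eq_prod_inv_pow]
  exact prod_pos fun i hi => one_sub_inv_pow_pos ht (hk.trans (mem_Icc.1 hi).1)

theorem omegaProd_le_one (ht : 1 < t) {k : ℕ} (hk : 1 ≤ k) (d : ℕ) : omegaProd k d t ≤ 1 := by
  rw [omegaProd_eq_prod_inv_pow]
  refine prod_le_one (fun i hi => (one_sub_inv_pow_pos ht (hk.trans (mem_Icc.1 hi).1)).le)
    fun i _ => ?_
  have : 0 < t⁻¹ ^ i := by positivity
  linarith

theorem omegaProd_one_lt_omegaProd_add (ht : 1 < t) {k m : ℕ} (hk : 1 ≤ k) (hm : 1 ≤ m) :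
    omegaProd 1 m t < omegaProd (k + 1) (k + m) t := by
  rw [omegaProd_add_eq_prod, omegaProd_eq_prod_inv_pow]
  refine prod_lt_prod_of_nonempty (fun i hi => one_sub_inv_pow_pos ht (mem_Icc.1 hi).1)
    (fun i _ => ?_) (nonempty_Icc.2 hm)
  have := pow_lt_pow_right_of_lt_one₀ (by positivity) (inv_lt_one_of_one_lt₀ ht)
    (show i < k + i by omega)
  linarith

theorem one_sub_inv_sub_inv_sq_lt_omegaProd_one (ht : 1 < t) {m : ℕ} (hm : 1 ≤ m) :
    1 - t⁻¹ - (t ^ 2)⁻¹ < omegaProd 1 m t := by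
  have hx1 : t⁻¹ ≤ 1 := (inv_lt_one_of_one_lt₀ ht).le
  have := one_sub_sub_sq_add_pow_le_prod_one_sub_pow (by positivity) hx1 hm
  have : 0 < t⁻¹ ^ (m + 1) := by positivity
  rw [omegaProd_eq_prod_inv_pow, ← inv_pow]
  linarith

end omegaProd

theorem one_sub_inv_sub_inv_sq_pos {t : ℝ} (ht : 2 ≤ t) : 0 < 1 - t⁻¹ - (t ^ 2)⁻¹ := by
  have h1 : t⁻¹ ≤ 2⁻¹ := inv_anti₀ (by norm_num) ht
  have h2 : (t ^ 2)⁻¹ ≤ (2 ^ 2)⁻¹ := inv_anti₀ (by norm_num) (by gcongr)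
  norm_num at h1 h2 ⊢
  linarith

theorem inv_one_sub_inv_sub_inv_sq_antitoneOn :
    AntitoneOn (fun t : ℝ => (1 - t⁻¹ - (t ^ 2)⁻¹)⁻¹) (Set.Ici 2) := by
  intro s (hs : 2 ≤ s) t _ hst
  have : 0 < s := by linarith
  dsimp only
  gcongr
  exact one_sub_inv_sub_inv_sq_pos hs

section Delta

variable {k d : ℕ} {t : ℝ}

theorem one_lt_Delta (ht : 1 < t) (hk : 1 ≤ k) (hkd : k < d) : 1 < Delta k d t := by
  obtain ⟨m, rfl⟩ := Nat.exists_eq_add_of_lt hkd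
  rw [Delta, show k + m + 1 - k = m + 1 by omega, one_lt_div (omegaProd_pos ht le_rfl _)]
  exact omegaProd_one_lt_omegaProd_add ht hk (by omega)

theorem Delta_lt_inv_one_sub_inv_sub_inv_sq (ht : 2 ≤ t) (hkd : k < d) :
    Delta k d t < (1 - t⁻¹ - (t ^ 2)⁻¹)⁻¹ := by
  have ht1 : 1 < t := by linarith
  have hB := one_sub_inv_sub_inv_sq_pos ht
  have hden := one_sub_inv_sub_inv_sq_lt_omegaProd_one ht1 (show 1 ≤ d - k by omega)
  calc Delta k d t ≤ 1 / omegaProd 1 (d - k) t :=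
        div_le_div_of_nonneg_right (omegaProd_le_one ht1 (by omega) d) (by linarith)
    _ < 1 / (1 - t⁻¹ - (t ^ 2)⁻¹) := one_div_lt_one_div_of_lt hB hden
    _ = _ := one_div _

end Delta

theorem Delta_pos_bounds_general
    (d q k : ℕ) (hq : 2 ≤ q) (hk1 : 1 ≤ k) (hk2 : k ≤ d - 1) :
    (1 < Delta k d (q : ℝ) ∧ Delta k d (q : ℝ) < (1 - (q : ℝ)⁻¹ - ((q : ℝ) ^ 2)⁻¹)⁻¹) ∧
    (q = 2 → Delta k d (q : ℝ) < 4) ∧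
    (q = 3 → Delta k d (q : ℝ) < 9 / 5) ∧
    (4 ≤ q → Delta k d (q : ℝ) < 16 / 11) ∧
    (9 ≤ q → Delta k d (q : ℝ) < 8 / 7) := by
  have hq' : (2 : ℝ) ≤ q := by exact_mod_cast hq
  have hkd : k < d := by omega
  have hupper := Delta_lt_inv_one_sub_inv_sub_inv_sq hq' hkd
  have hupper_at : ∀ s : ℝ, 2 ≤ s → s ≤ q → Delta k d q < (1 - s⁻¹ - (s ^ 2)⁻¹)⁻¹ :=
    fun s hs hsq => hupper.trans_le (inv_one_sub_inv_sub_inv_sq_antitoneOn hs hq' hsq)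
  refine ⟨⟨one_lt_Delta (by linarith) hk1 hkd, hupper⟩, ?_, ?_, ?_, ?_⟩
  · rintro rfl
    norm_num at hupper
    exact hupper
  · rintro rfl
    norm_num at hupper
    exact hupper
  · intro h
    have := hupper_at 4 (by norm_num) (by exact_mod_cast h)
    norm_num at this
    exact this
  · intro h
    have := hupper_at 9 (by norm_num) (by exact_mod_cast h)
    norm_num at this
    linarith

/-- Lemma: bounds for `Δ(k, d; q)` with `q ≥ 2` and `1 ≤ k ≤ d - 1`. -/
theorem Delta_pos_bounds
    (d q k : ℕ) (hd : 2 ≤ d) (hq : 2 ≤ q) (hk1 : 1 ≤ k) (hk2 : k ≤ d - 1) :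
    (1 < Delta k d (q : ℝ) ∧ Delta k d (q : ℝ) < (1 - (q : ℝ)⁻¹ - ((q : ℝ) ^ 2)⁻¹)⁻¹) ∧
    (q = 2 → Delta k d (q : ℝ) < 4) ∧
    (q = 3 → Delta k d (q : ℝ) < 9 / 5) ∧
    (4 ≤ q → Delta k d (q : ℝ) < 16 / 11) ∧
    (9 ≤ q → Delta k d (q : ℝ) < 8 / 7) :=
  Delta_pos_bounds_general d q k hq hk1 hk2
end

section
/- Let q ≥ 2 and let e1 ≥ e2 ≥ 2 be integers with d = e1 + e2, and for ε ∈ {−1, 1} define the real number Γ(ε) = 1 − (q^{−e1/2} + ε·q^{−e2/2})/(1 + ε·q^{−d/2}). Then 1 ≤ Γ(−1) < 1 + 1/q. If d ≥ 8 then 1 − 1/q − 1/q³ ≤ Γ(1) < 1. Moreover, if d ≥ 10 then 5/11 ≤ Γ(1) < 1 when q = 2, and 40/61 ≤ Γ(1) < 1 when q = 3. -/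
/-- `Γ(ε) = 1 - (q^{-e1/2} + ε q^{-e2/2}) / (1 + ε q^{-d/2})` (real powers). -/
noncomputable def GammaEps (q e1 e2 d : ℕ) (ε : ℝ) : ℝ :=
  1 - ((q : ℝ) ^ (-(e1 : ℝ) / 2) + ε * (q : ℝ) ^ (-(e2 : ℝ) / 2)) /
        (1 + ε * (q : ℝ) ^ (-(d : ℝ) / 2))

private lemma aux2 (s : ℝ) (hs0 : 0 ≤ s) (hs1 : s ≤ 1) (e1 e2 : ℕ)
    (h2 : 2 ≤ e2) (h12 : e2 ≤ e1) (hd : 8 ≤ e1 + e2) :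
    s ^ e1 + s ^ e2 ≤ s ^ 2 + s ^ 6 := by
  have hpow : ∀ m n : ℕ, m ≤ n → s ^ n ≤ s ^ m := fun m n h =>
    pow_le_pow_of_le_one hs0 hs1 h
  rcases Nat.lt_or_ge e2 4 with h | h
  · interval_cases e2
    · have := hpow 6 e1 (by omega); linarith
    · have h1 := hpow 5 e1 (by omega)
      have h3 : s ^ 3 ≤ 1 := pow_le_one₀ hs0 hs1
      nlinarith [mul_nonneg (mul_nonneg (pow_nonneg hs0 2) (sub_nonneg.2 hs1))
        (sub_nonneg.2 h3)]
  · have h1 := hpow 4 e1 (by omega)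
    have h2' := hpow 4 e2 h
    nlinarith [mul_nonneg (pow_nonneg hs0 2) (sq_nonneg (1 - s ^ 2))]

private lemma aux3 (s : ℝ) (hs0 : 0 ≤ s) (hs1 : s ≤ 1) (e1 e2 : ℕ)
    (h2 : 3 ≤ e2) (h12 : e2 ≤ e1) (hd : 10 ≤ e1 + e2) :
    s ^ e1 + s ^ e2 ≤ s ^ 3 + s ^ 7 := by
  have hpow : ∀ m n : ℕ, m ≤ n → s ^ n ≤ s ^ m := fun m n h =>
    pow_le_pow_of_le_one hs0 hs1 h
  rcases Nat.lt_or_ge e2 5 with h | h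
  · interval_cases e2
    · have := hpow 7 e1 (by omega); linarith
    · have h1 := hpow 6 e1 (by omega)
      have h3 : s ^ 3 ≤ 1 := pow_le_one₀ hs0 hs1
      nlinarith [mul_nonneg (mul_nonneg (pow_nonneg hs0 3) (sub_nonneg.2 hs1))
        (sub_nonneg.2 h3)]
  · have h1 := hpow 5 e1 (by omega)
    have h2' := hpow 5 e2 h
    nlinarith [mul_nonneg (pow_nonneg hs0 3) (sq_nonneg (1 - s ^ 2))]

set_option maxHeartbeats 1000000 in
/-- Lemma: bounds for `Γ(±1)`. -/
theorem GammaEps_bounds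
    (q e1 e2 d : ℕ) (hq : 2 ≤ q) (he2 : 2 ≤ e2) (he12 : e2 ≤ e1) (hd : d = e1 + e2) :
    (1 ≤ GammaEps q e1 e2 d (-1) ∧ GammaEps q e1 e2 d (-1) < 1 + 1 / (q : ℝ)) ∧
    (8 ≤ d →
      1 - 1 / (q : ℝ) - 1 / (q : ℝ) ^ 3 ≤ GammaEps q e1 e2 d 1 ∧ GammaEps q e1 e2 d 1 < 1) ∧
    (10 ≤ d → q = 2 → 5 / 11 ≤ GammaEps q e1 e2 d 1 ∧ GammaEps q e1 e2 d 1 < 1) ∧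
    (10 ≤ d → q = 3 → 40 / 61 ≤ GammaEps q e1 e2 d 1 ∧ GammaEps q e1 e2 d 1 < 1) := by
  subst hd
  have hq2R : (2:ℝ) ≤ (q:ℝ) := by exact_mod_cast hq
  have hq0 : (0:ℝ) < q := by linarith
  set s : ℝ := (q:ℝ) ^ (-(1:ℝ)/2) with hs_def
  have hrw : ∀ e : ℕ, (q:ℝ) ^ (-(e:ℝ)/2) = s ^ e := by
    intro e
    rw [hs_def, ← Real.rpow_natCast ((q:ℝ) ^ (-(1:ℝ)/2)) e, ← Real.rpow_mul hq0.le]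
    congr 1; ring
  have hs0 : 0 < s := Real.rpow_pos_of_pos hq0 _
  have hs2 : s ^ 2 = 1 / (q:ℝ) := by
    have h := (hrw 2).symm
    rw [h, show (-((2:ℕ):ℝ)/2) = (-1 : ℝ) by norm_num, Real.rpow_neg_one, one_div]
  have h12q : 1 / (q:ℝ) ≤ 1/2 := by
    rw [div_le_div_iff₀ hq0 (by norm_num)]; linarith
  have hs1 : s < 1 := by nlinarith
  -- positivity of powers
  have ha0 : 0 < s ^ e1 := pow_pos hs0 _
  have hb0 : 0 < s ^ e2 := pow_pos hs0 _
  have ha1 : s ^ e1 < 1 := pow_lt_one₀ hs0.le hs1 (by omega)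
  have hb1 : s ^ e2 < 1 := pow_lt_one₀ hs0.le hs1 (by omega)
  have hab : s ^ e1 ≤ s ^ e2 := pow_le_pow_of_le_one hs0.le hs1.le he12
  have hb2 : s ^ e2 ≤ 1 / (q:ℝ) := by
    rw [← hs2]; exact pow_le_pow_of_le_one hs0.le hs1.le he2
  have hG1 : GammaEps q e1 e2 (e1+e2) 1
      = 1 - (s ^ e1 + s ^ e2) / (1 + s ^ e1 * s ^ e2) := by
    simp only [GammaEps, hrw, pow_add]; ring
  have hG2 : GammaEps q e1 e2 (e1+e2) (-1)
      = 1 - (s ^ e1 - s ^ e2) / (1 - s ^ e1 * s ^ e2) := by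
    simp only [GammaEps, hrw, pow_add]; ring
  have hD2 : (0:ℝ) < 1 - s ^ e1 * s ^ e2 := by nlinarith
  have hD1 : (0:ℝ) < 1 + s ^ e1 * s ^ e2 := by nlinarith
  have hup : GammaEps q e1 e2 (e1+e2) 1 < 1 := by
    rw [hG1]
    have := div_pos (by linarith : (0:ℝ) < s ^ e1 + s ^ e2) hD1
    linarith
  refine ⟨⟨?_, ?_⟩, fun hd8 => ⟨?_, hup⟩, fun hd10 hq2 => ⟨?_, hup⟩,
    fun hd10 hq3 => ⟨?_, hup⟩⟩
  · rw [hG2]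
    have h : (s ^ e1 - s ^ e2) / (1 - s ^ e1 * s ^ e2) ≤ 0 :=
      div_nonpos_iff.mpr (Or.inr ⟨by linarith, by linarith⟩)
    linarith
  · rw [hG2]
    have key : (s ^ e2 - s ^ e1) / (1 - s ^ e1 * s ^ e2) < 1 / (q:ℝ) := by
      rw [div_lt_div_iff₀ hD2 hq0]
      have h1 : s ^ e2 * q ≤ 1 := by
        calc s ^ e2 * q ≤ (1/(q:ℝ)) * q := by nlinarith
        _ = 1 := by field_simp
      nlinarith [mul_pos ha0 (show (0:ℝ) < (q:ℝ) - s ^ e2 by nlinarith)]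
    have heq : (s ^ e1 - s ^ e2) / (1 - s ^ e1 * s ^ e2)
        = -((s ^ e2 - s ^ e1) / (1 - s ^ e1 * s ^ e2)) := by ring
    linarith [key, heq]
  · -- d ≥ 8 lower bound
    rw [hG1]
    have hle : (s ^ e1 + s ^ e2) / (1 + s ^ e1 * s ^ e2) ≤ s ^ e1 + s ^ e2 :=
      div_le_self (by linarith) (by nlinarith)
    have key := aux2 s hs0.le hs1.le e1 e2 he2 he12 hd8
    have hs6 : s ^ 6 = 1 / (q:ℝ) ^ 3 := by
      rw [show s ^ 6 = (s ^ 2) ^ 3 by ring, hs2, div_pow, one_pow]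
    linarith [hs2, hs6]
  · -- q = 2, d ≥ 10
    rw [hG1]
    have hs2' : s ^ 2 = 1/2 := by rw [hs2, hq2]; norm_num
    suffices h : (s ^ e1 + s ^ e2) / (1 + s ^ e1 * s ^ e2) ≤ 6/11 by linarith
    rw [div_le_div_iff₀ hD1 (by norm_num)]
    rcases eq_or_lt_of_le he2 with h2 | h3
    · subst h2
      have h8 : s ^ e1 ≤ 1/16 := by
        calc s ^ e1 ≤ s ^ 8 := pow_le_pow_of_le_one hs0.le hs1.le (by omega)
        _ = (s ^ 2) ^ 4 := by ring
        _ = 1/16 := by rw [hs2']; norm_num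
      rw [hs2']
      linarith [h8]
    · have hs071 : s ≤ 0.71 := by nlinarith [hs2', hs0, sq_nonneg (s - 71/100)]
      have h3' : s ^ 3 = s / 2 := by
        rw [show s ^ 3 = s * s ^ 2 by ring, hs2']; ring
      have h7' : s ^ 7 = s / 8 := by
        rw [show s ^ 7 = s * (s ^ 2) ^ 3 by ring, hs2']; ring
      have key := aux3 s hs0.le hs1.le e1 e2 h3 he12 hd10
      rw [h3', h7'] at key
      nlinarith [mul_pos ha0 hb0, hs071]
  · -- q = 3, d ≥ 10
    rw [hG1]
    have hs2' : s ^ 2 = 1/3 := by rw [hs2, hq3]; norm_num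
    suffices h : (s ^ e1 + s ^ e2) / (1 + s ^ e1 * s ^ e2) ≤ 21/61 by linarith
    rw [div_le_div_iff₀ hD1 (by norm_num)]
    rcases eq_or_lt_of_le he2 with h2 | h3
    · subst h2
      have h8 : s ^ e1 ≤ 1/81 := by
        calc s ^ e1 ≤ s ^ 8 := pow_le_pow_of_le_one hs0.le hs1.le (by omega)
        _ = (s ^ 2) ^ 4 := by ring
        _ = 1/81 := by rw [hs2']; norm_num
      rw [hs2']
      linarith [h8]
    · have hs058 : s ≤ 0.58 := by nlinarith [hs2', hs0, sq_nonneg (s - 58/100)]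
      have h3' : s ^ 3 = s / 3 := by
        rw [show s ^ 3 = s * s ^ 2 by ring, hs2']; ring
      have h7' : s ^ 7 = s / 27 := by
        rw [show s ^ 7 = s * (s ^ 2) ^ 3 by ring, hs2']; ring
      have key := aux3 s hs0.le hs1.le e1 e2 h3 he12 hd10
      rw [h3', h7'] at key
      nlinarith [mul_pos ha0 hb0, hs058]
end

section
/- Let q ≥ 2 and d = e1 + e2 be integers with 2 ≤ e2 ≤ e1 ≤ d − 2, and let B be the set of odd prime divisors of gcd(e1, e2). Then ∑_{b ∈ B} b·q^{e1·e2/b} < 3.01·q^{e1·e2/3}. -/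
/-! Every prime of `B` other than `3` is at least `5`, so with `E = e1 e2` those terms add up to at
most `(∑ b) q^(E/5) ≤ (∏ b) q^(E/5)`, and `∏ b` divides `gcd(e1, e2)`, whose square is at most `E`.
Since `q^(E/3) = q^(2E/15) q^(E/5)` and `q^(2E/15) ≥ 2^(2E/15)` is huge compared with `√E`, the
primes `≥ 5` contribute less than `q^(E/3)`; when `3 ∈ B` their product is at most `gcd(e1, e2)/3`,
which leaves room for the factor `1/100` next to the term `3 q^(E/3)`. -/

open Finset

theorem Finset.sum_le_prod_of_two_le {ι : Type*} {s : Finset ι} {f : ι → ℕ}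
    (h : ∀ i ∈ s, 2 ≤ f i) : ∑ i ∈ s, f i ≤ ∏ i ∈ s, f i := by
  induction s using Finset.cons_induction with
  | empty => simp
  | cons a s ha ih =>
    rw [sum_cons, prod_cons]
    have ha2 : 2 ≤ f a := h a (mem_cons_self a s)
    have hs : ∀ i ∈ s, 2 ≤ f i := fun i hi => h i (mem_cons_of_mem hi)
    rcases s.eq_empty_or_nonempty with rfl | ⟨x, hx⟩
    · simp
    · have hprod : 2 ≤ ∏ i ∈ s, f i :=
        (hs x hx).trans (single_le_prod' (fun i hi => (hs i hi).trans' one_le_two) hx)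
      calc f a + ∑ i ∈ s, f i ≤ f a + ∏ i ∈ s, f i := by gcongr; exact ih hs
        _ ≤ f a * ∏ i ∈ s, f i := add_le_mul ha2 hprod

theorem Nat.lt_two_pow_sub_two {n : ℕ} (hn : 5 ≤ n) : n < 2 ^ (n - 2) := by
  induction n, hn using Nat.le_induction with
  | base => norm_num
  | succ n hn ih =>
    rw [show n + 1 - 2 = n - 2 + 1 by omega, pow_succ]
    omega

theorem two_pow_mul_lt_rpow {q : ℝ} (hq : 2 ≤ q) {n : ℕ} (hn : 5 ≤ n) (k : ℕ) {y : ℝ}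
    (hy : (n : ℝ) - 2 + k ≤ y) : 2 ^ k * (n : ℝ) < q ^ y := by
  have hn' : (n : ℝ) < 2 ^ (n - 2) := by exact_mod_cast Nat.lt_two_pow_sub_two hn
  calc 2 ^ k * (n : ℝ) < 2 ^ k * 2 ^ (n - 2) := by gcongr
    _ = 2 ^ (n - 2 + k) := by rw [pow_add, mul_comm]
    _ ≤ q ^ (n - 2 + k) := by gcongr
    _ = q ^ (((n - 2 + k : ℕ) : ℝ)) := (Real.rpow_natCast q _).symm
    _ ≤ q ^ y := by
      apply Real.rpow_le_rpow_of_exponent_le (by linarith)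
      rwa [Nat.cast_add, Nat.cast_sub (by omega), Nat.cast_two]

theorem sum_mul_rpow_div_le_prod_mul_rpow {q : ℝ} (hq : 1 ≤ q) {S : Finset ℕ}
    (hS : ∀ b ∈ S, 5 ≤ b) {E : ℝ} (hE : 0 ≤ E) :
    ∑ b ∈ S, (b : ℝ) * q ^ (E / b) ≤ (∏ b ∈ S, b : ℕ) * q ^ (E / 5) := by
  have hsum : ((∑ b ∈ S, b : ℕ) : ℝ) ≤ (∏ b ∈ S, b : ℕ) := by
    exact_mod_cast sum_le_prod_of_two_le fun b hb => (hS b hb).trans' (by norm_num)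
  calc ∑ b ∈ S, (b : ℝ) * q ^ (E / b) ≤ ∑ b ∈ S, (b : ℝ) * q ^ (E / 5) := by
        refine sum_le_sum fun b hb => ?_
        have hb : (5 : ℝ) ≤ b := by exact_mod_cast hS b hb
        gcongr
    _ = ((∑ b ∈ S, b : ℕ) : ℝ) * q ^ (E / 5) := by rw [← sum_mul, Nat.cast_sum]
    _ ≤ (∏ b ∈ S, b : ℕ) * q ^ (E / 5) := by gcongr

theorem five_le_prod {S : Finset ℕ} (hS : ∀ b ∈ S, 5 ≤ b) (hSne : S.Nonempty) :
    5 ≤ ∏ b ∈ S, b :=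
  let ⟨b, hb⟩ := hSne
  (hS b hb).trans (single_le_prod' (fun i hi => (hS i hi).trans' (by norm_num)) hb)

theorem two_pow_mul_sum_mul_rpow_div_lt {q : ℝ} (hq : 2 ≤ q) {S : Finset ℕ}
    (hS : ∀ b ∈ S, 5 ≤ b) (hSne : S.Nonempty) (k : ℕ) (E : ℝ)
    (hE : ((∏ b ∈ S, b : ℕ) : ℝ) - 2 + k ≤ 2 * E / 15) :
    2 ^ k * ∑ b ∈ S, (b : ℝ) * q ^ (E / b) < q ^ (E / 3) := by
  have hP := five_le_prod hS hSne
  have hE0 : 0 ≤ E := by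
    have : (5 : ℝ) ≤ (∏ b ∈ S, b : ℕ) := by exact_mod_cast hP
    linarith [k.cast_nonneg (α := ℝ)]
  calc 2 ^ k * ∑ b ∈ S, (b : ℝ) * q ^ (E / b)
      ≤ 2 ^ k * ((∏ b ∈ S, b : ℕ) * q ^ (E / 5)) := by
        gcongr; exact sum_mul_rpow_div_le_prod_mul_rpow (by linarith) hS hE0
    _ = 2 ^ k * (∏ b ∈ S, b : ℕ) * q ^ (E / 5) := by ring
    _ < q ^ (2 * E / 15) * q ^ (E / 5) := by
        gcongr; exact two_pow_mul_lt_rpow hq hP k hE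
    _ = q ^ (E / 3) := by rw [← Real.rpow_add (by linarith)]; ring_nf

theorem prod_filter_prime_divisors_dvd (n : ℕ) (P : ℕ → Prop) [DecidablePred P] :
    ∏ b ∈ n.divisors.filter (fun b => b.Prime ∧ P b), b ∣ n := by
  refine (prod_dvd_prod_of_subset _ _ id fun b hb => ?_).trans (Nat.prod_primeFactors_dvd n)
  simp only [mem_filter, Nat.mem_divisors] at hb
  exact Nat.mem_primeFactors.mpr ⟨hb.2.1, hb.1.1, hb.1.2⟩

theorem five_le_of_mem_erase_three {n b : ℕ}
    (hb : b ∈ (n.divisors.filter (fun b => b.Prime ∧ b ≠ 2)).erase 3) : 5 ≤ b := by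
  simp only [mem_erase, mem_filter] at hb
  obtain ⟨hb3, -, hbp, hb2⟩ := hb
  by_contra! h
  interval_cases b <;> first | omega | norm_num at hbp

theorem sq_gcd_le_mul {a b : ℕ} (ha : 0 < a) (hb : 0 < b) : Nat.gcd a b ^ 2 ≤ a * b := by
  rw [sq]
  exact Nat.mul_le_mul (Nat.le_of_dvd ha (Nat.gcd_dvd_left a b))
    (Nat.le_of_dvd hb (Nat.gcd_dvd_right a b))

theorem sum_odd_prime_divisors_rpow_lt_general
    (q e1 e2 : ℕ) (hq : 2 ≤ q) (he2 : 2 ≤ e2) (he12 : e2 ≤ e1) :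
    ∑ b ∈ (Nat.gcd e1 e2).divisors.filter (fun b => b.Prime ∧ b ≠ 2),
        (b : ℝ) * (q : ℝ) ^ (((e1 : ℝ) * (e2 : ℝ)) / (b : ℝ)) <
      3.01 * (q : ℝ) ^ (((e1 : ℝ) * (e2 : ℝ)) / 3) := by
  set B := (Nat.gcd e1 e2).divisors.filter (fun b => b.Prime ∧ b ≠ 2)
  have hgE : ((Nat.gcd e1 e2 : ℕ) : ℝ) ^ 2 ≤ (e1 : ℝ) * e2 := by
    exact_mod_cast sq_gcd_le_mul (by omega : 0 < e1) (by omega : 0 < e2)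
  have hPg : ∏ b ∈ B, b ≤ Nat.gcd e1 e2 :=
    Nat.le_of_dvd (Nat.gcd_pos_of_pos_right _ (by omega)) (prod_filter_prime_divisors_dvd _ _)
  have hS5 : ∀ b ∈ B.erase 3, 5 ≤ b := fun b hb => five_le_of_mem_erase_three hb
  have hq' : (2 : ℝ) ≤ q := by exact_mod_cast hq
  have hpos : 0 < (q : ℝ) ^ ((e1 : ℝ) * e2 / 3) := by positivity
  by_cases h3 : 3 ∈ B
  · rw [← insert_erase h3, sum_insert (notMem_erase 3 B)]
    rcases (B.erase 3).eq_empty_or_nonempty with hS | hS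
    · rw [hS, sum_empty]; linarith
    · have h3P : ((3 * ∏ b ∈ B.erase 3, b : ℕ) : ℝ) ≤ Nat.gcd e1 e2 := by
        rwa [← prod_erase_mul _ _ h3, mul_comm, ← Nat.cast_le (α := ℝ)] at hPg
      have hP5 : (5 : ℝ) ≤ (∏ b ∈ B.erase 3, b : ℕ) := by exact_mod_cast five_le_prod hS5 hS
      have := two_pow_mul_sum_mul_rpow_div_lt hq' hS5 hS 7 ((e1 : ℝ) * e2) (by
        push_cast at h3P hP5 ⊢; nlinarith)
      norm_num at this ⊢; linarith
  · rw [← erase_eq_of_notMem h3] at ⊢ hPg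
    rcases (B.erase 3).eq_empty_or_nonempty with hS | hS
    · rw [hS, sum_empty]; positivity
    · have hP : ((∏ b ∈ B.erase 3, b : ℕ) : ℝ) ≤ Nat.gcd e1 e2 := by exact_mod_cast hPg
      have hP0 : (0 : ℝ) ≤ (∏ b ∈ B.erase 3, b : ℕ) := Nat.cast_nonneg _
      have := two_pow_mul_sum_mul_rpow_div_lt hq' hS5 hS 0 ((e1 : ℝ) * e2) (by
        nlinarith [mul_self_le_mul_self hP0 hP, sq_nonneg (((∏ b ∈ B.erase 3, b : ℕ) : ℝ) - 15 / 4)])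
      norm_num at this ⊢; linarith

/-- Lemma: for `q ≥ 2`, `2 ≤ e2 ≤ e1 ≤ d - 2` with `d = e1 + e2`, summing over the set `B`
of odd prime divisors of `gcd(e1, e2)`, one has `∑_{b ∈ B} b q^{e1 e2 / b} < 3.01 q^{e1 e2 / 3}`. -/
theorem sum_odd_prime_divisors_rpow_lt
    (q e1 e2 d : ℕ) (hq : 2 ≤ q) (he2 : 2 ≤ e2) (he12 : e2 ≤ e1)
    (he1d : e1 ≤ d - 2) (hd : d = e1 + e2) :
    ∑ b ∈ (Nat.gcd e1 e2).divisors.filter (fun b => b.Prime ∧ b ≠ 2),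
        (b : ℝ) * (q : ℝ) ^ (((e1 : ℝ) * (e2 : ℝ)) / (b : ℝ)) <
      3.01 * (q : ℝ) ^ (((e1 : ℝ) * (e2 : ℝ)) / 3) :=
  sum_odd_prime_divisors_rpow_lt_general q e1 e2 hq he2 he12
end

section
/- Let q ≥ 2 and d = e1 + e2 be integers with 2 ≤ e2 ≤ e1 ≤ d − 2, and let B be the set of odd prime divisors of gcd(e1, e2). Then q^{−e1·e2}·∑_{b ∈ B} b·q^{e1·e2/b} < 3.01·q^{−e1·e2/2}·q^{−(d−3)/2}. Moreover, if e2 ≠ 3 or 3 does not divide e1, then q^{−e1·e2}·∑_{b ∈ B} b·q^{e1·e2/b} < 3.01·q^{−e1·e2/2}·q^{−(d−6)}. -/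
/-!
Write `m = e1 e2` and `q^(-m) q^E` for either right-hand side without its factor `3.01`, so the
claim is `∑_{b ∈ B} b q^(m/b) < 3.01 q^E`. The term `b = 3` occurs only when `3 ∣ gcd e1 e2`, and
is at most `3 q^E` because `m/3 ≤ E`. Every other `b ∈ B` is a prime `b ≥ 5` with `e2 = s b`;
its exponent gap `E - e1 s` is at least `2b - 8`, and even `2b + 5` when `3 ∣ gcd e1 e2` (then
`3 ∣ s`). This makes the term at most `C 2^(-(b-5)) q^E` with `C = 3/2`, resp. `C = 1/250`, and the
geometric series bounds the sum of these terms by `2C q^E`: in total at most `3 q^E`, resp.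
`3.008 q^E`.
-/

open Finset Real

def oddPrimeDivisors (n : ℕ) : Finset ℕ := n.divisors.filter fun b => b.Prime ∧ b ≠ 2

lemma mem_oddPrimeDivisors {n b : ℕ} (hn : n ≠ 0) :
    b ∈ oddPrimeDivisors n ↔ b.Prime ∧ b ∣ n ∧ b ≠ 2 := by
  simp only [oddPrimeDivisors, mem_filter, Nat.mem_divisors, hn, ne_eq, not_false_eq_true,
    and_true]
  tauto

lemma five_le_of_mem_oddPrimeDivisors {n b : ℕ} (hb : b ∈ oddPrimeDivisors n) (hb3 : b ≠ 3) :
    5 ≤ b := by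
  obtain ⟨hp, hb2⟩ := (mem_filter.mp hb).2
  have hb4 : b ≠ 4 := by rintro rfl; norm_num at hp
  have := hp.two_le
  omega

lemma exists_mul_eq_of_mem_oddPrimeDivisors_gcd {e1 e2 b : ℕ} (he2 : e2 ≠ 0)
    (hb : b ∈ oddPrimeDivisors (e1.gcd e2)) (hb3 : b ≠ 3) :
    5 ≤ b ∧ ∃ s, 1 ≤ s ∧ s * b = e2 ∧ (3 ∣ e2 → 3 ≤ s) := by
  obtain ⟨hp, hbd, -⟩ := (mem_oddPrimeDivisors (Nat.gcd_ne_zero_right he2)).mp hb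
  obtain ⟨s, hs⟩ := hbd.trans (Nat.gcd_dvd_right e1 e2)
  have hs0 : 0 < s := Nat.pos_of_ne_zero (by rintro rfl; simp_all)
  refine ⟨five_le_of_mem_oddPrimeDivisors hb hb3, s, hs0, by rw [hs, mul_comm],
    fun h3 => Nat.le_of_dvd hs0 ?_⟩
  have hcop : Nat.Coprime 3 b := (Nat.coprime_primes Nat.prime_three hp).mpr (Ne.symm hb3)
  exact hcop.dvd_of_dvd_mul_left (hs ▸ h3)

lemma sum_le_two_mul_of_mul_two_pow_le {T : Finset ℕ} {n : ℕ} {f : ℕ → ℝ} {A : ℝ} (hA : 0 ≤ A)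
    (hf : ∀ b ∈ T, n ≤ b ∧ f b * 2 ^ (b - n) ≤ A) : ∑ b ∈ T, f b ≤ 2 * A := by
  have hinj : Set.InjOn (· - n) T := fun a ha b hb hab => by
    have := (hf a ha).1; have := (hf b hb).1; simp only at hab; omega
  calc ∑ b ∈ T, f b ≤ ∑ b ∈ T, A * (1 / 2) ^ (b - n) := sum_le_sum fun b hb => by
        rw [div_pow, one_pow, mul_one_div, le_div_iff₀ (by positivity)]; exact (hf b hb).2
    _ = A * ∑ k ∈ T.image (· - n), (1 / 2 : ℝ) ^ k := by rw [sum_image hinj, mul_sum]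
    _ ≤ A * 2 := by
        gcongr
        exact (summable_geometric_two.sum_le_tsum _ fun _ _ => by positivity).trans_eq
          tsum_geometric_two
    _ = 2 * A := mul_comm _ _

lemma mul_rpow_le_mul_rpow_of_le_mul_two_rpow {Q a C x L E : ℝ} (hQ : 2 ≤ Q) (hC : 0 ≤ C)
    (hL : 0 ≤ L) (ha : a ≤ C * 2 ^ L) (hE : x + L ≤ E) : a * Q ^ x ≤ C * Q ^ E :=
  calc a * Q ^ x ≤ C * 2 ^ L * Q ^ x := by gcongr
    _ ≤ C * Q ^ L * Q ^ x := by gcongr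
    _ = C * Q ^ (x + L) := by rw [rpow_add (by linarith)]; ring
    _ ≤ C * Q ^ E := mul_le_mul_of_nonneg_left (rpow_le_rpow_of_exponent_le (by linarith) hE) hC

lemma natCast_mul_two_pow_le_two_rpow_sub {b : ℕ} (hb : 5 ≤ b) :
    (b : ℝ) * 2 ^ (b - 5) ≤ 3 / 2 * 2 ^ (2 * (b : ℝ) - 8) := by
  obtain ⟨k, rfl⟩ : ∃ k, b = k + 5 := ⟨b - 5, by omega⟩
  have hk : (k : ℝ) + 1 ≤ 2 ^ k := by exact_mod_cast Nat.lt_two_pow_self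
  rw [show 2 * ((k + 5 : ℕ) : ℝ) - 8 = ((2 * k + 2 : ℕ) : ℝ) by push_cast; ring, rpow_natCast,
    Nat.add_sub_cancel, pow_add, two_mul, pow_add]
  push_cast
  nlinarith [pow_pos (two_pos : (0 : ℝ) < 2) k]

lemma natCast_mul_two_pow_le_two_rpow_add {b : ℕ} (hb : 5 ≤ b) :
    (b : ℝ) * 2 ^ (b - 5) ≤ 1 / 250 * 2 ^ (2 * (b : ℝ) + 5) := by
  obtain ⟨k, rfl⟩ : ∃ k, b = k + 5 := ⟨b - 5, by omega⟩
  have hk : (k : ℝ) + 1 ≤ 2 ^ k := by exact_mod_cast Nat.lt_two_pow_self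
  rw [show 2 * ((k + 5 : ℕ) : ℝ) + 5 = ((2 * k + 15 : ℕ) : ℝ) by push_cast; ring, rpow_natCast,
    Nat.add_sub_cancel, pow_add, two_mul, pow_add]
  push_cast
  nlinarith [pow_pos (two_pos : (0 : ℝ) < 2) k]

theorem sum_oddPrimeDivisors_gcd_lt {q e1 e2 : ℕ} {E : ℝ} (hq : 2 ≤ q) (he2 : e2 ≠ 0)
    (h3 : 3 ∣ e1 → 3 ∣ e2 → (e1 : ℝ) * e2 / 3 ≤ E)
    (hI : ∀ s b : ℝ, 1 ≤ s → 5 ≤ b → s * b = e2 → e1 * s + (2 * b - 8) ≤ E)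
    (hII : ∀ s b : ℝ, 3 ≤ s → 5 ≤ b → s * b = e2 → e1 * s + (2 * b + 5) ≤ E) :
    ∑ b ∈ oddPrimeDivisors (e1.gcd e2), (b : ℝ) * (q : ℝ) ^ ((e1 : ℝ) * e2 / b) <
      3.01 * (q : ℝ) ^ E := by
  have hQ : (2 : ℝ) ≤ q := by exact_mod_cast hq
  have hqE : 0 < (q : ℝ) ^ E := rpow_pos_of_pos (by linarith) E
  have hexp {s b : ℕ} (hb : 5 ≤ b) : (e1 : ℝ) * ↑(s * b) / b = e1 * s := by
    have : (b : ℝ) ≠ 0 := by positivity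
    push_cast; field_simp
  by_cases h3B : 3 ∈ oddPrimeDivisors (e1.gcd e2)
  · obtain ⟨-, h3g, -⟩ := (mem_oddPrimeDivisors (Nat.gcd_ne_zero_right he2)).mp h3B
    have h31 := h3g.trans (Nat.gcd_dvd_left e1 e2)
    have h32 := h3g.trans (Nat.gcd_dvd_right e1 e2)
    rw [← add_sum_erase _ _ h3B]
    have hhead : (3 : ℝ) * (q : ℝ) ^ ((e1 : ℝ) * e2 / 3) ≤ 3 * q ^ E := by
      gcongr
      exacts [by linarith, h3 h31 h32]
    have htail : ∑ b ∈ (oddPrimeDivisors (e1.gcd e2)).erase 3,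
        (b : ℝ) * (q : ℝ) ^ ((e1 : ℝ) * e2 / b) ≤ 2 * (1 / 250 * q ^ E) :=
      sum_le_two_mul_of_mul_two_pow_le (n := 5) (by positivity) fun b hb => by
        obtain ⟨hb3, hb⟩ := mem_erase.mp hb
        obtain ⟨h5, s, -, hsb, hs3⟩ := exists_mul_eq_of_mem_oddPrimeDivisors_gcd he2 hb hb3
        refine ⟨h5, ?_⟩
        rw [← hsb, hexp h5, mul_right_comm]
        exact mul_rpow_le_mul_rpow_of_le_mul_two_rpow hQ (by norm_num) (by positivity)
          (natCast_mul_two_pow_le_two_rpow_add h5) (hII s b (by exact_mod_cast hs3 h32)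
            (by exact_mod_cast h5) (by exact_mod_cast hsb))
    push_cast
    linarith
  · have htail : ∑ b ∈ oddPrimeDivisors (e1.gcd e2),
        (b : ℝ) * (q : ℝ) ^ ((e1 : ℝ) * e2 / b) ≤ 2 * (3 / 2 * q ^ E) :=
      sum_le_two_mul_of_mul_two_pow_le (n := 5) (by positivity) fun b hb => by
        obtain ⟨h5, s, hs, hsb, -⟩ :=
          exists_mul_eq_of_mem_oddPrimeDivisors_gcd he2 hb (by rintro rfl; exact h3B hb)
        have h5' : (5 : ℝ) ≤ b := by exact_mod_cast h5
        refine ⟨h5, ?_⟩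
        rw [← hsb, hexp h5, mul_right_comm]
        exact mul_rpow_le_mul_rpow_of_le_mul_two_rpow hQ (by norm_num) (by linarith)
          (natCast_mul_two_pow_le_two_rpow_sub h5) (hI s b (by exact_mod_cast hs) h5'
            (by exact_mod_cast hsb))
    linarith

noncomputable def firstExponent (e1 e2 : ℝ) : ℝ := e1 * e2 / 2 - (e1 + e2 - 3) / 2

noncomputable def secondExponent (e1 e2 : ℝ) : ℝ := e1 * e2 / 2 - (e1 + e2 - 6)

section

variable {e1 e2 s b : ℝ}

lemma mul_div_three_le_firstExponent (h3 : 3 ≤ e2) (he : e2 ≤ e1) :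
    e1 * e2 / 3 ≤ firstExponent e1 e2 := by
  unfold firstExponent
  nlinarith [mul_nonneg (by linarith : (0 : ℝ) ≤ e1 - 3) (sub_nonneg.2 h3)]

lemma mul_div_three_le_secondExponent (h6 : 6 ≤ e2) (he : e2 ≤ e1) :
    e1 * e2 / 3 ≤ secondExponent e1 e2 := by
  unfold secondExponent
  nlinarith [mul_nonneg (by linarith : (0 : ℝ) ≤ e1 - 6) (sub_nonneg.2 h6)]

lemma mul_add_two_mul_sub_eight_le_firstExponent (hs : 1 ≤ s) (hb : 5 ≤ b) (hsb : s * b = e2)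
    (he : e2 ≤ e1) : e1 * s + (2 * b - 8) ≤ firstExponent e1 e2 := by
  subst hsb
  unfold firstExponent
  have h1 : 0 ≤ s * (b - 2) - 1 := by nlinarith
  nlinarith [mul_nonneg (sub_nonneg.2 he) h1, mul_nonneg (mul_nonneg (sub_nonneg.2 hs)
    (by linarith : (0 : ℝ) ≤ b)) (by nlinarith : (0 : ℝ) ≤ (b - 2) * (s + 1) - 2)]

lemma mul_add_two_mul_add_five_le_firstExponent (hs : 3 ≤ s) (hb : 5 ≤ b) (hsb : s * b = e2)
    (he : e2 ≤ e1) : e1 * s + (2 * b + 5) ≤ firstExponent e1 e2 := by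
  subst hsb
  unfold firstExponent
  have h1 : 0 ≤ s * (b - 2) - 1 := by nlinarith
  nlinarith [mul_nonneg (sub_nonneg.2 he) h1, mul_nonneg (mul_nonneg (sub_nonneg.2 hs)
    (by linarith : (0 : ℝ) ≤ b)) (by nlinarith : (0 : ℝ) ≤ (b - 2) * (s + 3) - 2)]

lemma mul_add_two_mul_sub_eight_le_secondExponent (hs : 1 ≤ s) (hb : 5 ≤ b) (hsb : s * b = e2)
    (he : e2 ≤ e1) : e1 * s + (2 * b - 8) ≤ secondExponent e1 e2 := by
  subst hsb
  unfold secondExponent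
  have h1 : 0 ≤ s * (b - 2) - 2 := by nlinarith
  nlinarith [mul_nonneg (sub_nonneg.2 he) h1, mul_nonneg (mul_nonneg (sub_nonneg.2 hs)
    (by linarith : (0 : ℝ) ≤ b)) (by nlinarith : (0 : ℝ) ≤ (b - 2) * (s + 1) - 4)]

lemma mul_add_two_mul_add_five_le_secondExponent (hs : 3 ≤ s) (hb : 5 ≤ b) (hsb : s * b = e2)
    (he : e2 ≤ e1) : e1 * s + (2 * b + 5) ≤ secondExponent e1 e2 := by
  subst hsb
  unfold secondExponent
  have h1 : 0 ≤ s * (b - 2) - 2 := by nlinarith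
  nlinarith [mul_nonneg (sub_nonneg.2 he) h1, mul_nonneg (mul_nonneg (sub_nonneg.2 hs)
    (by linarith : (0 : ℝ) ≤ b)) (by nlinarith : (0 : ℝ) ≤ (b - 2) * (s + 3) - 4)]

end

lemma rpow_neg_mul_lt_of_lt {Q m F E S c : ℝ} (hQ : 0 < Q) (hE : m / 2 + F = E)
    (h : S < c * Q ^ E) : Q ^ (-m) * S < c * Q ^ (-m / 2) * Q ^ F :=
  calc Q ^ (-m) * S < Q ^ (-m) * (c * Q ^ (m / 2 + F)) := by rw [hE]; gcongr
    _ = c * Q ^ (-m / 2) * Q ^ F := by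
      rw [mul_left_comm, ← rpow_add hQ, mul_assoc, ← rpow_add hQ]; ring_nf

theorem sum_odd_prime_divisors_rpow_bounds_general
    (q e1 e2 d : ℕ) (hq : 2 ≤ q) (he2 : 2 ≤ e2) (he12 : e2 ≤ e1)
    (hd : d = e1 + e2) :
    ((q : ℝ) ^ (-((e1 : ℝ) * (e2 : ℝ)))) *
        ∑ b ∈ (Nat.gcd e1 e2).divisors.filter (fun b => b.Prime ∧ b ≠ 2),
          (b : ℝ) * (q : ℝ) ^ (((e1 : ℝ) * (e2 : ℝ)) / (b : ℝ)) <
      3.01 * (q : ℝ) ^ (-((e1 : ℝ) * (e2 : ℝ)) / 2) * (q : ℝ) ^ (-((d : ℝ) - 3) / 2) ∧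
    (e2 ≠ 3 ∨ ¬ 3 ∣ e1 →
      ((q : ℝ) ^ (-((e1 : ℝ) * (e2 : ℝ)))) *
          ∑ b ∈ (Nat.gcd e1 e2).divisors.filter (fun b => b.Prime ∧ b ≠ 2),
            (b : ℝ) * (q : ℝ) ^ (((e1 : ℝ) * (e2 : ℝ)) / (b : ℝ)) <
        3.01 * (q : ℝ) ^ (-((e1 : ℝ) * (e2 : ℝ)) / 2) * (q : ℝ) ^ (-((d : ℝ) - 6))) := by
  subst hd
  have hq0 : (0 : ℝ) < q := Nat.cast_pos.2 (by omega)
  have he : (e2 : ℝ) ≤ e1 := by exact_mod_cast he12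
  refine ⟨rpow_neg_mul_lt_of_lt hq0 (by push_cast; unfold firstExponent; ring)
      (sum_oddPrimeDivisors_gcd_lt hq (by omega) (fun _ h2 => ?_)
        (fun _ _ hs hb hsb => mul_add_two_mul_sub_eight_le_firstExponent hs hb hsb he)
        (fun _ _ hs hb hsb => mul_add_two_mul_add_five_le_firstExponent hs hb hsb he)),
    fun h => rpow_neg_mul_lt_of_lt hq0 (by push_cast; unfold secondExponent; ring)
      (sum_oddPrimeDivisors_gcd_lt hq (by omega) (fun h1 h2 => ?_)
        (fun _ _ hs hb hsb => mul_add_two_mul_sub_eight_le_secondExponent hs hb hsb he)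
        (fun _ _ hs hb hsb => mul_add_two_mul_add_five_le_secondExponent hs hb hsb he))⟩
  · exact mul_div_three_le_firstExponent (by exact_mod_cast Nat.le_of_dvd (by omega) h2) he
  · exact mul_div_three_le_secondExponent (by exact_mod_cast (by omega : 6 ≤ e2)) he

/-- Lemma: for `q ≥ 2`, `2 ≤ e2 ≤ e1 ≤ d - 2` with `d = e1 + e2`, and `B` the set of odd
prime divisors of `gcd(e1, e2)`:
`q^{-e1 e2} ∑_{b ∈ B} b q^{e1 e2 / b} < 3.01 q^{-e1 e2 / 2} q^{-(d-3)/2}`, and moreover if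
`e2 ≠ 3` or `3 ∤ e1` then `q^{-e1 e2} ∑_{b ∈ B} b q^{e1 e2 / b} < 3.01 q^{-e1 e2 / 2} q^{-(d-6)}`. -/
theorem sum_odd_prime_divisors_rpow_bounds
    (q e1 e2 d : ℕ) (hq : 2 ≤ q) (he2 : 2 ≤ e2) (he12 : e2 ≤ e1)
    (he1d : e1 ≤ d - 2) (hd : d = e1 + e2) :
    ((q : ℝ) ^ (-((e1 : ℝ) * (e2 : ℝ)))) *
        ∑ b ∈ (Nat.gcd e1 e2).divisors.filter (fun b => b.Prime ∧ b ≠ 2),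
          (b : ℝ) * (q : ℝ) ^ (((e1 : ℝ) * (e2 : ℝ)) / (b : ℝ)) <
      3.01 * (q : ℝ) ^ (-((e1 : ℝ) * (e2 : ℝ)) / 2) * (q : ℝ) ^ (-((d : ℝ) - 3) / 2) ∧
    (e2 ≠ 3 ∨ ¬ 3 ∣ e1 →
      ((q : ℝ) ^ (-((e1 : ℝ) * (e2 : ℝ)))) *
          ∑ b ∈ (Nat.gcd e1 e2).divisors.filter (fun b => b.Prime ∧ b ≠ 2),
            (b : ℝ) * (q : ℝ) ^ (((e1 : ℝ) * (e2 : ℝ)) / (b : ℝ)) <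
        3.01 * (q : ℝ) ^ (-((e1 : ℝ) * (e2 : ℝ)) / 2) * (q : ℝ) ^ (-((d : ℝ) - 6))) :=
  sum_odd_prime_divisors_rpow_bounds_general q e1 e2 d hq he2 he12 hd
end
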